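/- Assume G : ℕ → ℕ is strictly increasing with G 1 = 1, and there is an integer s ≥ 2 such that G (i+1) ≤ s · G i for all i ≥ 1. Fix n ≥ 2 and set m = G n, and set κ = 1/(4 − 4·cos(π/(s+1))). Let p and π be the t-step distribution and the uniform distribution of the random walk on ℤ_m determined by G 1, …, G n. Then for every real ε > 0 and every natural number t with t ≥ κ·n·log(m − 1) − κ·n·log(4ε²), the total variation distance satisfies (1/2)·Σ_{x ∈ ZMod m} |p t x − π x| ≤ ε. -/

import Mathlib

open Finset Real

/-- Step distribution of the random walk on `ℤ_m` with steps drawn uniformly from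
`{G 1, …, G n}`. -/
noncomputable def stepDist (G : ℕ → ℕ) (n m : ℕ) [NeZero m] (x : ZMod m) : ℝ :=
  (1 / n : ℝ) * ((Finset.Icc 1 n).filter (fun i => (G i : ZMod m) = x)).card

/-- `t`-step distribution of the random walk started at `0`. -/
noncomputable def walkDist (G : ℕ → ℕ) (n m : ℕ) [NeZero m] : ℕ → ZMod m → ℝ
  | 0 => fun x => if x = 0 then 1 else 0
  | t + 1 => fun x => ∑ y : ZMod m, walkDist G n m t y * stepDist G n m (x - y)

/-!
The Fourier coefficients of the step distribution `μ` are the eigenvalues of the walk: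
`p̂ₜ(k) = μ̂(k)ᵗ`, so Cauchy–Schwarz and Parseval give
`(∑ₓ |pₜ x - 1/m|)² ≤ ∑_{k ≠ 0} |μ̂(k)|^{2t}`. For `k ≠ 0`, `n μ̂(k)` is a sum of `n` unit
vectors `exp (2πi k G j / m)` whose last one is `1`. Taking `|k| ≤ m/2`, the orbit
`k G j / m` starts in `[-1/2, 1/2]`, grows at most by the factor `s` and ends at a nonzero
integer, so some earlier term lies at distance at least `1/(s+1)`
from every integer, and that term together with the last one has modulus at most
`2 cos (π/(s+1))`. Hence `|μ̂(k)| ≤ 1 - 2γ/n ≤ exp (-2γ/n)` with `γ = 1 - cos (π/(s+1))`, and the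
choice of `t` makes `(m - 1) exp (-4γt/n) ≤ 4ε²`.
-/

open ZMod

lemma one_sub_cos_pi_div_add_one_mem_Ioc {s : ℝ} (hs : 1 ≤ s) :
    0 < 1 - cos (π / (s + 1)) ∧ 1 - cos (π / (s + 1)) ≤ 1 := by
  have h0 : 0 < π / (s + 1) := by positivity
  have h1 : π / (s + 1) ≤ π / 2 := div_le_div_of_nonneg_left pi_pos.le two_pos (by linarith)
  constructor
  · linarith [cos_lt_cos_of_nonneg_of_le_pi le_rfl (by linarith [pi_pos]) h0, cos_zero]
  · linarith [cos_nonneg_of_mem_Icc ⟨by linarith [pi_pos], h1⟩]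

lemma one_sub_pow_le_exp_neg_mul {a : ℝ} (ha : a ≤ 1) (k : ℕ) :
    (1 - a) ^ k ≤ exp (-(k * a)) := by
  calc (1 - a) ^ k ≤ exp (-a) ^ k := pow_le_pow_left₀ (by linarith) (one_sub_le_exp_neg a) k
    _ = exp (-(k * a)) := by rw [← exp_nat_mul, mul_neg]

lemma mul_exp_neg_le_of_log_sub_le {A B u : ℝ} (hA : 0 ≤ A) (hB : 0 < B)
    (h : log A - log B ≤ u) : A * exp (-u) ≤ B := by
  rcases hA.eq_or_lt with rfl | hA
  · rw [zero_mul]; exact hB.le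
  calc A * exp (-u) = exp (log A - u) := by rw [exp_sub, exp_log hA, div_eq_mul_inv, exp_neg]
    _ ≤ exp (log B) := exp_le_exp.mpr (by linarith)
    _ = B := exp_log hB

lemma norm_one_add_exp_two_pi_mul_I (x : ℝ) :
    ‖1 + Complex.exp (2 * π * Complex.I * x)‖ = 2 * |cos (π * x)| := by
  have h : 1 + Complex.exp (2 * π * Complex.I * x)
      = -(Complex.exp (Complex.I * ((2 * π * x + π : ℝ) : ℂ)) - 1) := by
    push_cast
    rw [mul_add, Complex.exp_add, mul_comm Complex.I (π : ℂ), Complex.exp_pi_mul_I]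
    ring_nf
  rw [h, norm_neg, Complex.norm_exp_I_mul_ofReal_sub_one, norm_mul, Real.norm_eq_abs,
    Real.norm_eq_abs, abs_two, show (2 * π * x + π) / 2 = π * x + π / 2 by ring, sin_add_pi_div_two]

lemma abs_cos_pi_mul_le {δ x : ℝ} (hδ0 : 0 ≤ δ) (hx : ∀ N : ℤ, δ ≤ |x - N|) :
    |cos (π * x)| ≤ cos (π * δ) := by
  set θ := x - round x
  have hθ : |θ| ≤ 1 / 2 := abs_sub_round x
  have hcos : |cos (π * x)| = cos (π * |θ|) := by
    rw [show π * x = π * θ + round x * π by ring, cos_add_int_mul_pi, abs_mul, abs_neg_one_zpow,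
      one_mul, ← cos_abs, abs_mul, abs_of_pos pi_pos]
    refine abs_of_nonneg (cos_nonneg_of_mem_Icc ⟨?_, ?_⟩) <;> nlinarith [pi_pos, abs_nonneg θ]
  rw [hcos]
  exact cos_le_cos_of_nonneg_of_le_pi (by positivity)
    (by nlinarith [pi_pos, abs_nonneg θ]) (by nlinarith [pi_pos, hx (round x)])

lemma exists_far_from_int {s : ℝ} (hs : 1 ≤ s) {x : ℕ → ℝ} {n : ℕ} (hn : 1 ≤ n)
    (hx1 : x 1 ≤ 1 / 2) (hxn : 1 ≤ x n)
    (hstep : ∀ j, 1 ≤ j → j < n → x (j + 1) ≤ s * x j) :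
    ∃ j, 1 ≤ j ∧ j < n ∧ ∀ N : ℤ, 1 / (s + 1) ≤ |x j - N| := by
  set δ := 1 / (s + 1) with hδ
  have hδ0 : 0 < δ := by positivity
  have hsδ : s * δ = 1 - δ := by rw [hδ]; field_simp; ring
  have hδ2 : δ ≤ 1 / 2 := by rw [hδ]; gcongr; linarith
  by_contra! hnear
  have hsmall : ∀ j, 1 ≤ j → j < n → x j ≤ 1 - δ → x j < δ := by
    intro j hj hjn hxj
    obtain ⟨N, hN⟩ := hnear j hj hjn
    rcases abs_lt.mp hN with ⟨h1, h2⟩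
    rcases le_or_gt N 0 with hN0 | hN0
    · have : (N : ℝ) ≤ 0 := by exact_mod_cast hN0
      linarith
    · have : (1 : ℝ) ≤ N := by exact_mod_cast hN0
      linarith
  -- `x j ≤ 1 - δ` propagates from `j = 1` to `j = n` because `s δ = 1 - δ`
  have hbound : ∀ j, 1 ≤ j → j ≤ n → x j ≤ 1 - δ := by
    intro j hj
    induction j, hj using Nat.le_induction with
    | base => intro _; linarith
    | succ j hj ih =>
      intro hjn
      calc x (j + 1) ≤ s * x j := hstep j hj hjn
        _ ≤ s * δ := by gcongr; exact (hsmall j hj hjn (ih (by omega))).le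
        _ = 1 - δ := hsδ
  linarith [hbound n hn le_rfl]

lemma norm_sum_le_card_sub_two_add {E ι : Type*} [SeminormedAddCommGroup E] {T : Finset ι}
    {z : ι → E} (hz : ∀ j ∈ T, ‖z j‖ ≤ 1) {a b : ι} (ha : a ∈ T) (hb : b ∈ T) (hab : a ≠ b) :
    ‖∑ j ∈ T, z j‖ ≤ (#T - 2 : ℝ) + ‖z a + z b‖ := by
  classical
  have ha' : a ∈ T.erase b := mem_erase.mpr ⟨hab, ha⟩
  rw [← add_sum_erase T z hb, ← add_sum_erase _ z ha']
  have hT : 1 < #T := one_lt_card.mpr ⟨a, ha, b, hb, hab⟩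
  have hrest : ‖∑ j ∈ (T.erase b).erase a, z j‖ ≤ #T - 2 := by
    calc ‖∑ j ∈ (T.erase b).erase a, z j‖ ≤ ∑ j ∈ (T.erase b).erase a, 1 :=
          norm_sum_le_of_le _ fun j hj => hz j (mem_of_mem_erase (mem_of_mem_erase hj))
      _ = #T - 2 := by
          rw [sum_const, card_erase_of_mem ha', card_erase_of_mem hb, nsmul_one,
            Nat.cast_sub (by omega : 1 ≤ #T - 1), Nat.cast_sub hT.le]
          ring
  calc ‖z b + (z a + ∑ j ∈ (T.erase b).erase a, z j)‖
      ≤ ‖z a + z b‖ + ‖∑ j ∈ (T.erase b).erase a, z j‖ := by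
        rw [← add_assoc, add_comm (z b)]; exact norm_add_le _ _
    _ ≤ _ := by linarith

namespace ZMod
variable {N : ℕ} [NeZero N]

lemma sum_stdAddChar_mul (b : ZMod N) :
    ∑ k : ZMod N, stdAddChar (k * b) = if b = 0 then (N : ℂ) else 0 := by
  rw [AddChar.sum_mulShift b (isPrimitive_stdAddChar N), ZMod.card]
  split_ifs <;> simp

lemma dft_const (c : ℂ) (k : ZMod N) : 𝓕 (fun _ => c) k = if k = 0 then N * c else 0 := by
  simp_rw [dft_apply, smul_eq_mul, ← sum_mul, ← mul_neg, sum_stdAddChar_mul, neg_eq_zero]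
  split_ifs <;> simp

lemma dft_conv (Φ Ψ : ZMod N → ℂ) (k : ZMod N) :
    𝓕 (fun x => ∑ y, Φ y * Ψ (x - y)) k = 𝓕 Φ k * 𝓕 Ψ k := by
  simp_rw [dft_apply, smul_eq_mul, sum_mul, mul_sum]
  rw [sum_comm]
  refine sum_congr rfl fun y _ => ?_
  rw [← Equiv.sum_comp (Equiv.addLeft y)]
  refine sum_congr rfl fun z _ => ?_
  simp only [Equiv.coe_addLeft, add_sub_cancel_left, add_mul, neg_add, AddChar.map_add_eq_mul]
  ring

lemma sum_norm_sq_dft (Φ : ZMod N → ℂ) : ∑ k, ‖𝓕 Φ k‖ ^ 2 = N * ∑ j, ‖Φ j‖ ^ 2 := by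
  apply Complex.ofReal_injective
  push_cast
  simp_rw [← Complex.mul_conj', dft_apply, smul_eq_mul, map_sum, map_mul,
    ← AddChar.map_neg_eq_conj, neg_neg, sum_mul_sum, mul_sum]
  rw [sum_comm]
  refine sum_congr rfl fun j _ => ?_
  rw [sum_comm]
  have hk : ∀ l, ∑ k : ZMod N,
      stdAddChar (-(j * k)) * Φ j * (stdAddChar (l * k) * (starRingEnd ℂ) (Φ l))
      = Φ j * (starRingEnd ℂ) (Φ l) * ∑ k : ZMod N, stdAddChar (k * (l - j)) := by
    intro l
    rw [mul_sum]
    refine sum_congr rfl fun k _ => ?_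
    rw [mul_sub, sub_eq_neg_add, AddChar.map_add_eq_mul]
    ring_nf
  simp_rw [hk, sum_stdAddChar_mul, sub_eq_zero, mul_ite, mul_zero, sum_ite_eq', mem_univ, if_true]
  ring

lemma sq_sum_norm_le_sum_norm_dft_sq (Φ : ZMod N → ℂ) :
    (∑ j, ‖Φ j‖) ^ 2 ≤ ∑ k, ‖𝓕 Φ k‖ ^ 2 := by
  rw [sum_norm_sq_dft]
  simpa [ZMod.card] using sq_sum_le_card_mul_sum_sq (s := univ) (f := fun j => ‖Φ j‖)

end ZMod

lemma exists_far_from_int_intCast_mul_div {G : ℕ → ℕ} (hG1 : G 1 = 1) {s : ℕ} (hs : 1 ≤ s)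
    {n m : ℕ} (hn : 1 ≤ n) (hstep : ∀ i, 1 ≤ i → i < n → G (i + 1) ≤ s * G i) (hm : m = G n)
    {v : ℤ} (hv0 : v ≠ 0) (hv2 : 2 * v.natAbs ≤ m) :
    ∃ j, 1 ≤ j ∧ j < n ∧ ∀ N : ℤ, 1 / ((s : ℝ) + 1) ≤ |(v : ℝ) * G j / m - N| := by
  have hv1 : 1 ≤ v.natAbs := Int.natAbs_pos.mpr hv0
  have hm0 : (0 : ℝ) < m := by exact_mod_cast (by omega : 0 < m)
  have hvabs : |(v : ℝ)| = v.natAbs := by rw [Nat.cast_natAbs, Int.cast_abs]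
  set x : ℕ → ℝ := fun j => |(v : ℝ)| * G j / m
  have hx1 : x 1 ≤ 1 / 2 := by
    have : (2 * v.natAbs : ℝ) ≤ m := by exact_mod_cast hv2
    simp only [x]
    rw [div_le_iff₀ hm0, hG1, Nat.cast_one, mul_one, hvabs]
    linarith
  have hxn : 1 ≤ x n := by
    simp only [x]
    rw [← hm, mul_div_assoc, div_self hm0.ne', mul_one, hvabs]
    exact_mod_cast hv1
  have hxstep : ∀ i, 1 ≤ i → i < n → x (i + 1) ≤ s * x i := by
    intro i hi hin
    simp only [x]
    rw [← mul_div_assoc, ← mul_assoc, mul_comm (s : ℝ), mul_assoc]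
    gcongr
    exact_mod_cast hstep i hi hin
  obtain ⟨j, hj1, hjn, hfar⟩ := exists_far_from_int (by exact_mod_cast hs) hn hx1 hxn hxstep
  refine ⟨j, hj1, hjn, fun N => ?_⟩
  rcases abs_choice (v : ℝ) with hpos | hneg
  · simpa only [x, hpos] using hfar N
  · have := hfar (-N)
    simp only [x] at this
    rw [hneg, ← abs_neg] at this
    convert this using 2
    push_cast
    ring

lemma norm_sum_stdAddChar_le {G : ℕ → ℕ} (hG1 : G 1 = 1) {s : ℕ} (hs : 1 ≤ s) {n m : ℕ}
    [NeZero m] (hn : 1 ≤ n) (hstep : ∀ i, 1 ≤ i → i < n → G (i + 1) ≤ s * G i) (hm : m = G n)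
    {k : ZMod m} (hk : k ≠ 0) :
    ‖∑ j ∈ Icc 1 n, stdAddChar ((G j : ZMod m) * k)‖
      ≤ n - 2 * (1 - cos (π / (s + 1))) := by
  -- `v` is the representative of `k` in `(-m/2, m/2]`
  obtain ⟨v, rfl, hv0, hv2⟩ : ∃ v : ℤ, (v : ZMod m) = k ∧ v ≠ 0 ∧ 2 * v.natAbs ≤ m :=
    ⟨k.valMinAbs, k.coe_valMinAbs, (valMinAbs_eq_zero k).not.mpr hk,
      by have := k.natAbs_valMinAbs_le; omega⟩
  have hχ : ∀ j, stdAddChar ((G j : ZMod m) * (v : ZMod m))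
      = Complex.exp (2 * π * Complex.I * ((v * G j / m : ℝ) : ℂ)) := by
    intro j
    rw [← Int.cast_natCast, ← Int.cast_mul, stdAddChar_coe]
    push_cast
    ring_nf
  have hχn : stdAddChar ((G n : ZMod m) * (v : ZMod m)) = 1 := by
    rw [← hm, natCast_self, zero_mul, AddChar.map_zero_eq_one]
  obtain ⟨j, hj1, hjn, hfar⟩ :=
    exists_far_from_int_intCast_mul_div hG1 hs hn hstep hm hv0 hv2
  calc ‖∑ j ∈ Icc 1 n, stdAddChar ((G j : ZMod m) * (v : ZMod m))‖
      ≤ (#(Icc 1 n) - 2 : ℝ) + ‖stdAddChar ((G n : ZMod m) * (v : ZMod m))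
          + stdAddChar ((G j : ZMod m) * (v : ZMod m))‖ :=
        norm_sum_le_card_sub_two_add (fun i _ => (AddChar.norm_apply _ _).le)
          (mem_Icc.mpr ⟨hn, le_rfl⟩) (mem_Icc.mpr ⟨hj1, hjn.le⟩) hjn.ne'
    _ = (n - 2 : ℝ) + 2 * |cos (π * (v * G j / m))| := by
        rw [Nat.card_Icc, hχn, hχ, norm_one_add_exp_two_pi_mul_I, add_tsub_cancel_right]
    _ ≤ (n - 2 : ℝ) + 2 * cos (π * (1 / (s + 1))) := by
        gcongr
        exact abs_cos_pi_mul_le (by positivity) hfar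
    _ = n - 2 * (1 - cos (π / (s + 1))) := by
        rw [mul_one_div]
        ring

section Walk
variable (G : ℕ → ℕ) (n : ℕ) {m : ℕ} [NeZero m]

lemma sum_stepDist_mul (g : ZMod m → ℂ) :
    ∑ x, (stepDist G n m x : ℂ) * g x = (1 / n) * ∑ j ∈ Icc 1 n, g (G j) := by
  simp_rw [stepDist]
  push_cast
  simp_rw [mul_assoc, ← mul_sum]
  congr 1
  rw [← sum_fiberwise (Icc 1 n) (fun j => (G j : ZMod m))]
  refine sum_congr rfl fun x _ => ?_
  rw [sum_congr rfl fun j hj => by rw [(mem_filter.mp hj).2], sum_const, nsmul_eq_mul]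

lemma dft_stepDist (k : ZMod m) :
    𝓕 (fun x => (stepDist G n m x : ℂ)) k
      = (1 / n) * ∑ j ∈ Icc 1 n, stdAddChar ((G j : ZMod m) * -k) := by
  simp_rw [dft_apply, smul_eq_mul, mul_comm (stdAddChar _), sum_stepDist_mul, mul_neg]

lemma dft_walkDist (t : ℕ) (k : ZMod m) :
    𝓕 (fun x => (walkDist G n m t x : ℂ)) k = 𝓕 (fun x => (stepDist G n m x : ℂ)) k ^ t := by
  induction t with
  | zero => simp [walkDist, dft_apply, apply_ite]
  | succ t ih =>
    simp_rw [walkDist, Complex.ofReal_sum, Complex.ofReal_mul]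
    have h := dft_conv (fun y => (walkDist G n m t y : ℂ)) (fun y => (stepDist G n m y : ℂ)) k
    rw [ih, ← pow_succ] at h
    exact h

lemma dft_stepDist_zero (hn : n ≠ 0) : 𝓕 (fun x => (stepDist G n m x : ℂ)) 0 = 1 := by
  simp [dft_stepDist, hn]

lemma dft_walkDist_sub_uniform (hn : n ≠ 0) (t : ℕ) (k : ZMod m) :
    𝓕 (fun x => ((walkDist G n m t x - 1 / m : ℝ) : ℂ)) k
      = if k = 0 then 0 else 𝓕 (fun x => (stepDist G n m x : ℂ)) k ^ t := by
  have hsplit : (fun x => ((walkDist G n m t x - 1 / m : ℝ) : ℂ))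
      = (fun x => (walkDist G n m t x : ℂ)) - fun _ => (1 / m : ℂ) := by
    ext x
    push_cast
    rfl
  rw [hsplit, map_sub, Pi.sub_apply, dft_walkDist, dft_const]
  split_ifs with hk
  · rw [hk, dft_stepDist_zero G n hn, one_pow, mul_one_div_cancel (NeZero.ne _), sub_self]
  · rw [sub_zero]

lemma sq_sum_abs_walkDist_sub_le (hn : n ≠ 0) {r : ℝ}
    (hr : ∀ k : ZMod m, k ≠ 0 → ‖𝓕 (fun x => (stepDist G n m x : ℂ)) k‖ ≤ r) (t : ℕ) :
    (∑ x, |walkDist G n m t x - 1 / m|) ^ 2 ≤ (m - 1) * r ^ (2 * t) := by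
  calc (∑ x, |walkDist G n m t x - 1 / m|) ^ 2
      = (∑ x, ‖((walkDist G n m t x - 1 / m : ℝ) : ℂ)‖) ^ 2 := by
        simp_rw [Complex.norm_real, Real.norm_eq_abs]
    _ ≤ ∑ k, ‖𝓕 (fun x => ((walkDist G n m t x - 1 / m : ℝ) : ℂ)) k‖ ^ 2 :=
        sq_sum_norm_le_sum_norm_dft_sq _
    _ = ∑ k ∈ univ.erase (0 : ZMod m),
          ‖𝓕 (fun x => ((walkDist G n m t x - 1 / m : ℝ) : ℂ)) k‖ ^ 2 := by
        rw [sum_erase _ (by rw [dft_walkDist_sub_uniform G n hn, if_pos rfl]; simp)]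
    _ ≤ ∑ k ∈ univ.erase (0 : ZMod m), r ^ (2 * t) := by
        refine sum_le_sum fun k hk => ?_
        rw [dft_walkDist_sub_uniform G n hn, if_neg (ne_of_mem_erase hk), norm_pow, ← pow_mul,
          mul_comm]
        exact pow_le_pow_left₀ (norm_nonneg _) (hr k (ne_of_mem_erase hk)) _
    _ = (m - 1) * r ^ (2 * t) := by
        rw [sum_const, card_erase_of_mem (mem_univ _), card_univ, ZMod.card, nsmul_eq_mul,
          Nat.cast_pred (Nat.pos_of_ne_zero (NeZero.ne m))]

end Walk

lemma norm_dft_stepDist_le {G : ℕ → ℕ} (hG1 : G 1 = 1) {s : ℕ} (hs : 1 ≤ s) {n m : ℕ}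
    [NeZero m] (hn : 1 ≤ n) (hstep : ∀ i, 1 ≤ i → i < n → G (i + 1) ≤ s * G i) (hm : m = G n)
    {k : ZMod m} (hk : k ≠ 0) :
    ‖𝓕 (fun x => (stepDist G n m x : ℂ)) k‖ ≤ 1 - 2 * (1 - cos (π / (s + 1))) / n := by
  have hn0 : (0 : ℝ) < n := by exact_mod_cast hn
  rw [dft_stepDist, norm_mul, norm_div, norm_one, Complex.norm_natCast]
  calc 1 / (n : ℝ) * ‖∑ j ∈ Icc 1 n, stdAddChar ((G j : ZMod m) * -k)‖
      ≤ 1 / n * (n - 2 * (1 - cos (π / (s + 1)))) := by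
        gcongr
        exact norm_sum_stdAddChar_le hG1 hs hn hstep hm (neg_ne_zero.mpr hk)
    _ = 1 - 2 * (1 - cos (π / (s + 1))) / n := by field_simp

theorem mixing_time_upper_bound_general_general
    (G : ℕ → ℕ) (hG1 : G 1 = 1)
    (s : ℕ) (hs2 : 2 ≤ s) (hs : ∀ i, 1 ≤ i → G (i + 1) ≤ s * G i)
    (n : ℕ) (hn : 2 ≤ n) (m : ℕ) [NeZero m] (hm : m = G n)
    (κ : ℝ) (hκ : κ = 1 / (4 - 4 * Real.cos (π / ((s : ℝ) + 1))))
    (ε : ℝ) (hε : 0 < ε) (t : ℕ)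
    (ht : κ * n * Real.log ((m : ℝ) - 1) - κ * n * Real.log (4 * ε ^ 2) ≤ t) :
    (1 / 2 : ℝ) * ∑ x : ZMod m, |walkDist G n m t x - 1 / m| ≤ ε := by
  have hs1 : (1 : ℝ) ≤ s := by exact_mod_cast (by omega : 1 ≤ s)
  obtain ⟨hγ0, hγ1⟩ := one_sub_cos_pi_div_add_one_mem_Ioc hs1
  set γ := 1 - cos (π / (s + 1))
  have hnr : (2 : ℝ) ≤ n := by exact_mod_cast hn
  have hL2 := sq_sum_abs_walkDist_sub_le G n (by omega)
    (fun k hk => norm_dft_stepDist_le hG1 (by omega) (by omega) (fun i hi _ => hs i hi) hm hk) t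
  have hlog : log ((m : ℝ) - 1) - log (4 * ε ^ 2) ≤ 2 * t * (2 * γ / n) := by
    rw [hκ, show 4 - 4 * cos (π / (s + 1)) = 4 * γ by ring] at ht
    have := mul_le_mul_of_nonneg_left ht (by positivity : (0 : ℝ) ≤ 4 * γ / n)
    field_simp at this ⊢
    linarith
  have hm1 : (0 : ℝ) ≤ m - 1 := sub_nonneg.mpr (by exact_mod_cast NeZero.one_le)
  have hsq : (∑ x : ZMod m, |walkDist G n m t x - 1 / m|) ^ 2 ≤ (2 * ε) ^ 2 :=
    calc _ ≤ (m - 1) * (1 - 2 * γ / n) ^ (2 * t) := hL2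
      _ ≤ (m - 1) * exp (-(↑(2 * t) * (2 * γ / n))) := by
        gcongr
        exact one_sub_pow_le_exp_neg_mul (by rw [div_le_one (by linarith)]; linarith) _
      _ ≤ 4 * ε ^ 2 := mul_exp_neg_le_of_log_sub_le hm1 (by positivity) (by push_cast; exact hlog)
      _ = (2 * ε) ^ 2 := by ring
  linarith [le_of_pow_le_pow_left₀ two_ne_zero (by positivity) hsq]

/-- Mixing-time upper bound for the random walk determined by a linear recurrence:
`t_mix(ε) ≤ κ n log(G n - 1) - κ n log(4ε²)` with `κ = 1/(4 - 4cos(π/(s+1)))`. -/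
theorem mixing_time_upper_bound_general
    (G : ℕ → ℕ) (hG1 : G 1 = 1) (hmono : ∀ i, 1 ≤ i → G i < G (i + 1))
    (s : ℕ) (hs2 : 2 ≤ s) (hs : ∀ i, 1 ≤ i → G (i + 1) ≤ s * G i)
    (n : ℕ) (hn : 2 ≤ n) (m : ℕ) [NeZero m] (hm : m = G n)
    (κ : ℝ) (hκ : κ = 1 / (4 - 4 * Real.cos (π / ((s : ℝ) + 1))))
    (ε : ℝ) (hε : 0 < ε) (t : ℕ)
    (ht : κ * n * Real.log ((m : ℝ) - 1) - κ * n * Real.log (4 * ε ^ 2) ≤ t) :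
    (1 / 2 : ℝ) * ∑ x : ZMod m, |walkDist G n m t x - 1 / m| ≤ ε :=
  mixing_time_upper_bound_general_general G hG1 s hs2 hs n hn m hm κ hκ ε hε t ht
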